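/- arXiv:2410.20524 — 2 statements merged into one kernel-verified Lean document; each statement's English description precedes it below -/
import Mathlib

section
/- Let B be a skew left brace, I₁, …, Iₙ minimal ideals of B, and I := I₁+⋯+Iₙ the additive subgroup of (B,+) generated by I₁ ∪ ⋯ ∪ Iₙ. Then I_i*I_i = {0} for all i ∈ {1,…,n} if and only if I*I = {0}. -/
/-- A *skew left brace* is a set with two group structures `(B,+)` and `(B,∘)`
(the latter written multiplicatively) satisfying `a∘(b+c) = a∘b - a + a∘c`.
The two identity elements automatically coincide. -/
class SkewLeftBrace (B : Type*) extends AddGroup B, Group B where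
  mul_add_eq : ∀ a b c : B, a * (b + c) = a * b - a + a * c

namespace SkewLeftBrace

variable {B : Type*} [SkewLeftBrace B]

/-- The map `λ_a : b ↦ -a + a∘b`. -/
def lmap (a b : B) : B := -a + a * b

/-- The brace star operation `a*b := -a + a∘b - b`. -/
def bstar (a b : B) : B := -a + a * b - b

/-- `X*Y`: the additive subgroup generated by all `bstar x y`, `x ∈ X`, `y ∈ Y`,
regarded as a set. -/
def setStar (X Y : Set B) : Set B :=
  ↑(AddSubgroup.closure {z : B | ∃ x ∈ X, ∃ y ∈ Y, z = bstar x y})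

/-- Pointwise sum of two subsets. -/
def setSum (X Y : Set B) : Set B := {w : B | ∃ x ∈ X, ∃ y ∈ Y, w = x + y}

/-- `X^Z := {z + x - z : x ∈ X, z ∈ Z}`. -/
def setConj (X Z : Set B) : Set B := {w : B | ∃ x ∈ X, ∃ z ∈ Z, w = z + x + -z}

/-- An ideal of a skew left brace: a subgroup of `(B,+)` which is normal in both
`(B,+)` and `(B,∘)` and invariant under all the maps `λ_a`. -/
structure IsIdeal (I : Set B) : Prop where
  zero_mem : (0 : B) ∈ I
  add_mem : ∀ ⦃x y : B⦄, x ∈ I → y ∈ I → x + y ∈ I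
  neg_mem : ∀ ⦃x : B⦄, x ∈ I → -x ∈ I
  add_conj_mem : ∀ (b : B) ⦃x : B⦄, x ∈ I → b + x + -b ∈ I
  mul_mem : ∀ ⦃x y : B⦄, x ∈ I → y ∈ I → x * y ∈ I
  inv_mem : ∀ ⦃x : B⦄, x ∈ I → x⁻¹ ∈ I
  mul_conj_mem : ∀ (b : B) ⦃x : B⦄, x ∈ I → b * x * b⁻¹ ∈ I
  lmap_mem : ∀ (a : B) ⦃x : B⦄, x ∈ I → lmap a x ∈ I

/-- A minimal ideal: a nonzero ideal whose only sub-ideals are `{0}` and itself. -/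
def IsMinimalIdeal (I : Set B) : Prop :=
  IsIdeal I ∧ I ≠ {0} ∧ ∀ J : Set B, IsIdeal J → J ⊆ I → J = {0} ∨ J = I

theorem mul_zero' (a : B) : a * (0 : B) = a := by
  have h := SkewLeftBrace.mul_add_eq a (0 : B) (0 : B)
  rw [add_zero] at h
  have h2 : a * (0:B) - a = 0 := (right_eq_add.mp h)
  exact sub_eq_zero.mp h2

theorem zero_eq_one : (0 : B) = 1 := by
  have h := mul_zero' (1 : B)
  rw [one_mul] at h
  exact h

theorem IsIdeal.one_mem {I : Set B} (h : IsIdeal I) : (1 : B) ∈ I :=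
  (zero_eq_one (B := B)) ▸ h.zero_mem

variable (B) in
/-- A skew left brace is *semiprime* if `I*I ≠ {0}` for every nonzero ideal `I`. -/
def Semiprime : Prop := ∀ I : Set B, IsIdeal I → I ≠ {0} → setStar I I ≠ {0}

variable (B) in
/-- A skew left brace is *prime*... (and) *simple* if its only ideals are `{0}` and `B`,
and these are distinct. -/
def Simple : Prop :=
  ({0} : Set B) ≠ Set.univ ∧ ∀ I : Set B, IsIdeal I → I = {0} ∨ I = Set.univ

variable (B) in
/-- A skew left brace is *Artinian* if every descending chain of ideals stabilizes. -/
def Artinian : Prop :=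
  ∀ f : ℕ → Set B, (∀ n, IsIdeal (f n)) → (∀ n, f (n + 1) ⊆ f n) →
    ∃ N, ∀ n, N ≤ n → f n = f N

/-- The `*`-products of copies of a fixed set `I`. -/
inductive IsStarPowerOf (I : Set B) : Set B → Prop
  | base : IsStarPowerOf I I
  | star {X Y : Set B} : IsStarPowerOf I X → IsStarPowerOf I Y →
      IsStarPowerOf I (setStar X Y)

variable (B) in
/-- A skew left brace is *strongly semiprime* if for every nonzero ideal `I`, every
`*`-product of copies of `I` is nonzero. -/
def StronglySemiprime : Prop :=
  ∀ I : Set B, IsIdeal I → I ≠ {0} → ∀ X : Set B, IsStarPowerOf I X → X ≠ {0}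

/-- The `*`-products of nonzero ideals. -/
inductive IsStarProdOfNonzeroIdeals : Set B → Prop
  | ideal {I : Set B} : IsIdeal I → I ≠ {0} → IsStarProdOfNonzeroIdeals I
  | star {X Y : Set B} : IsStarProdOfNonzeroIdeals X → IsStarProdOfNonzeroIdeals Y →
      IsStarProdOfNonzeroIdeals (setStar X Y)

variable (B) in
/-- A skew left brace is *strongly prime* if every `*`-product of nonzero ideals is nonzero. -/
def StronglyPrime : Prop :=
  ∀ X : Set B, IsStarProdOfNonzeroIdeals X → X ≠ {0}

end SkewLeftBrace
namespace SkewLeftBrace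

variable {B : Type*} [SkewLeftBrace B]

/-- An ideal, regarded as a skew left brace with the restricted operations. -/
def IsIdeal.brace {I : Set B} (h : IsIdeal I) : SkewLeftBrace I :=
  letI : Zero I := ⟨⟨0, h.zero_mem⟩⟩
  letI : Add I := ⟨fun x y => ⟨x.1 + y.1, h.add_mem x.2 y.2⟩⟩
  letI : Neg I := ⟨fun x => ⟨-x.1, h.neg_mem x.2⟩⟩
  letI : One I := ⟨⟨1, h.one_mem⟩⟩
  letI : Mul I := ⟨fun x y => ⟨x.1 * y.1, h.mul_mem x.2 y.2⟩⟩
  letI : Inv I := ⟨fun x => ⟨x.1⁻¹, h.inv_mem x.2⟩⟩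
  { add := (· + ·)
    zero := 0
    neg := (- ·)
    nsmul := nsmulRec
    zsmul := zsmulRec
    add_assoc := fun a b c => Subtype.ext (add_assoc a.1 b.1 c.1)
    zero_add := fun a => Subtype.ext (zero_add a.1)
    add_zero := fun a => Subtype.ext (add_zero a.1)
    neg_add_cancel := fun a => Subtype.ext (neg_add_cancel a.1)
    mul := (· * ·)
    one := 1
    inv := (·⁻¹)
    npow := npowRec
    zpow := zpowRec
    mul_assoc := fun a b c => Subtype.ext (mul_assoc a.1 b.1 c.1)
    one_mul := fun a => Subtype.ext (one_mul a.1)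
    mul_one := fun a => Subtype.ext (mul_one a.1)
    inv_mul_cancel := fun a => Subtype.ext (inv_mul_cancel a.1)
    mul_add_eq := fun a b c =>
      Subtype.ext (by
        show a.1 * (b.1 + c.1) = a.1 * b.1 + -a.1 + a.1 * c.1
        rw [SkewLeftBrace.mul_add_eq, sub_eq_add_neg]) }

/-- The direct product of two skew left braces, with componentwise operations. -/
def prodBrace (B₁ B₂ : Type*) [SkewLeftBrace B₁] [SkewLeftBrace B₂] :
    SkewLeftBrace (B₁ × B₂) :=
  { (inferInstance : AddGroup (B₁ × B₂)), (inferInstance : Group (B₁ × B₂)) with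
    mul_add_eq := fun a b c =>
      Prod.ext (by simp [SkewLeftBrace.mul_add_eq]) (by simp [SkewLeftBrace.mul_add_eq]) }

/-- Two skew left braces are isomorphic if there is a bijection preserving `+` and `∘`. -/
def IsBraceIsomorphic (A C : Type*) [SkewLeftBrace A] [SkewLeftBrace C] : Prop :=
  ∃ f : A ≃ C, (∀ x y : A, f (x + y) = f x + f y) ∧ (∀ x y : A, f (x * y) = f x * f y)

/-- A group homomorphism from `(B₂,∘)` to the automorphism group `Aut(B₁,+,∘)` of the
skew left brace `B₁`, presented as an action `act : B₂ → B₁ → B₁` by skew left brace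
automorphisms. -/
structure BraceActionHom (B₂ B₁ : Type*) [SkewLeftBrace B₂] [SkewLeftBrace B₁] where
  act : B₂ → B₁ → B₁
  act_bijective : ∀ a : B₂, Function.Bijective (act a)
  act_add : ∀ (a : B₂) (x y : B₁), act a (x + y) = act a x + act a y
  act_mul : ∀ (a : B₂) (x y : B₁), act a (x * y) = act a x * act a y
  act_hom : ∀ (a b : B₂) (x : B₁), act (a * b) x = act a (act b x)
  act_one : ∀ x : B₁, act (1 : B₂) x = x

variable {B₁ B₂ : Type*} [SkewLeftBrace B₁] [SkewLeftBrace B₂]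

theorem BraceActionHom.act_one' (α : BraceActionHom B₂ B₁) (a : B₂) :
    α.act a (1 : B₁) = 1 := by
  have h := α.act_mul a 1 1
  rw [mul_one] at h
  exact mul_eq_left.mp h.symm

/-- The underlying type of the semidirect product of two skew left braces. -/
@[ext]
structure SDP (B₁ B₂ : Type*) where
  fst : B₁
  snd : B₂

/-- The semidirect product `B₁ ⋊_α B₂` of skew left braces: the additive group is the
direct product, while `(a₁,a₂) ∘ (b₁,b₂) = (a₁ ∘ α_{a₂}(b₁), a₂ ∘ b₂)`. -/
def BraceActionHom.sdp (α : BraceActionHom B₂ B₁) : SkewLeftBrace (SDP B₁ B₂) :=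
  letI : Zero (SDP B₁ B₂) := ⟨⟨0, 0⟩⟩
  letI : Add (SDP B₁ B₂) := ⟨fun p q => ⟨p.fst + q.fst, p.snd + q.snd⟩⟩
  letI : Neg (SDP B₁ B₂) := ⟨fun p => ⟨-p.fst, -p.snd⟩⟩
  letI : One (SDP B₁ B₂) := ⟨⟨1, 1⟩⟩
  letI : Mul (SDP B₁ B₂) := ⟨fun p q => ⟨p.fst * α.act p.snd q.fst, p.snd * q.snd⟩⟩
  letI : Inv (SDP B₁ B₂) := ⟨fun p => ⟨α.act p.snd⁻¹ p.fst⁻¹, p.snd⁻¹⟩⟩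
  { add := (· + ·)
    zero := 0
    neg := (- ·)
    nsmul := nsmulRec
    zsmul := zsmulRec
    add_assoc := fun a b c =>
      SDP.ext (add_assoc a.fst b.fst c.fst) (add_assoc a.snd b.snd c.snd)
    zero_add := fun a => SDP.ext (zero_add a.fst) (zero_add a.snd)
    add_zero := fun a => SDP.ext (add_zero a.fst) (add_zero a.snd)
    neg_add_cancel := fun a => SDP.ext (neg_add_cancel a.fst) (neg_add_cancel a.snd)
    mul := (· * ·)
    one := 1
    inv := (·⁻¹)
    npow := npowRec
    zpow := zpowRec
    mul_assoc := fun a b c =>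
      SDP.ext
        (by show (a.fst * α.act a.snd b.fst) * α.act (a.snd * b.snd) c.fst =
              a.fst * α.act a.snd (b.fst * α.act b.snd c.fst)
            rw [α.act_hom, α.act_mul, mul_assoc])
        (mul_assoc a.snd b.snd c.snd)
    one_mul := fun a =>
      SDP.ext (by show (1 : B₁) * α.act 1 a.fst = a.fst; rw [α.act_one, one_mul])
        (one_mul a.snd)
    mul_one := fun a =>
      SDP.ext (by show a.fst * α.act a.snd (1 : B₁) = a.fst; rw [α.act_one', mul_one])
        (mul_one a.snd)
    inv_mul_cancel := fun a =>
      SDP.ext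
        (by show α.act a.snd⁻¹ a.fst⁻¹ * α.act a.snd⁻¹ a.fst = 1
            rw [← α.act_mul, inv_mul_cancel, α.act_one'])
        (inv_mul_cancel a.snd)
    mul_add_eq := fun a b c =>
      SDP.ext
        (by show a.fst * α.act a.snd (b.fst + c.fst) =
              a.fst * α.act a.snd b.fst + -a.fst + a.fst * α.act a.snd c.fst
            rw [α.act_add, SkewLeftBrace.mul_add_eq, sub_eq_add_neg])
        (by show a.snd * (b.snd + c.snd) = a.snd * b.snd + -a.snd + a.snd * c.snd
            rw [SkewLeftBrace.mul_add_eq, sub_eq_add_neg]) }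

end SkewLeftBrace

open SkewLeftBrace

/-!
Two distinct minimal ideals meet in `{0}`, and `x * y ∈ I ∩ J` for `x ∈ I`, `y ∈ J`; so if every
`I_k * I_k` vanishes, then `x * y = 0`, i.e. `λ_x y = y`, for all `x, y` in `S := ⋃ I_k`. Each `λ_x`
is additive, hence fixes the additive closure `I` of `S` pointwise. If `λ_x` and `λ_z` fix `I`
pointwise and `z ∈ I`, then `x + z = x ∘ z`, so `λ_{x+z} = λ_x λ_z` fixes `I`; similarly `-x = x⁻¹`
for `x ∈ I`, so `λ_{-x} = λ_x⁻¹` fixes `I`. Thus `λ_x y = y`, i.e. `x * y = 0`, for all `x, y ∈ I`.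
-/

namespace SkewLeftBrace

variable {B : Type*} [SkewLeftBrace B]

theorem lmap_add (a b c : B) : lmap a (b + c) = lmap a b + lmap a c := by
  simp only [lmap, mul_add_eq, sub_eq_add_neg, add_assoc]

def lmapHom (a : B) : B →+ B := AddMonoidHom.mk' (lmap a) (lmap_add a)

theorem mul_eq_add_lmap (a b : B) : a * b = a + lmap a b := by
  rw [lmap, add_neg_cancel_left]

theorem lmap_mul (a b c : B) : lmap (a * b) c = lmap a (lmap b c) := by
  have hneg : lmap a (-b) = -lmap a b := map_neg (lmapHom a) b
  calc lmap (a * b) c = -(-a + a * b) + (-a + a * (b * c)) := by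
        rw [lmap, mul_assoc]; simp only [neg_add_rev, neg_neg, add_assoc, add_neg_cancel_left]
    _ = lmap a (-b + b * c) := by rw [lmap_add, hneg]; rfl

theorem lmap_one (b : B) : lmap (1 : B) b = b := by
  rw [lmap, one_mul, ← zero_eq_one, neg_zero, zero_add]

theorem lmap_inv_eq_self {a b : B} (h : lmap a b = b) : lmap a⁻¹ b = b := by
  conv_lhs => rw [← h]
  rw [← lmap_mul, inv_mul_cancel, lmap_one]

theorem bstar_eq_zero_iff {a b : B} : bstar a b = 0 ↔ lmap a b = b := by
  rw [bstar, ← lmap, sub_eq_zero]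

theorem setStar_eq_zero_iff {X Y : Set B} :
    setStar X Y = {0} ↔ ∀ x ∈ X, ∀ y ∈ Y, bstar x y = 0 := by
  rw [setStar, ← AddSubgroup.coe_bot, SetLike.coe_set_eq, AddSubgroup.closure_eq_bot_iff]
  constructor
  · exact fun h x hx y hy => h ⟨x, hx, y, hy, rfl⟩
  · rintro h _ ⟨x, hx, y, hy, rfl⟩
    exact h x hx y hy

theorem IsIdeal.inter {I J : Set B} (hI : IsIdeal I) (hJ : IsIdeal J) : IsIdeal (I ∩ J) where
  zero_mem := ⟨hI.zero_mem, hJ.zero_mem⟩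
  add_mem _ _ hx hy := ⟨hI.add_mem hx.1 hy.1, hJ.add_mem hx.2 hy.2⟩
  neg_mem _ hx := ⟨hI.neg_mem hx.1, hJ.neg_mem hx.2⟩
  add_conj_mem b _ hx := ⟨hI.add_conj_mem b hx.1, hJ.add_conj_mem b hx.2⟩
  mul_mem _ _ hx hy := ⟨hI.mul_mem hx.1 hy.1, hJ.mul_mem hx.2 hy.2⟩
  inv_mem _ hx := ⟨hI.inv_mem hx.1, hJ.inv_mem hx.2⟩
  mul_conj_mem b _ hx := ⟨hI.mul_conj_mem b hx.1, hJ.mul_conj_mem b hx.2⟩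
  lmap_mem a _ hx := ⟨hI.lmap_mem a hx.1, hJ.lmap_mem a hx.2⟩

theorem IsIdeal.bstar_mem_left {I : Set B} (hI : IsIdeal I) {x : B} (hx : x ∈ I) (y : B) :
    bstar x y ∈ I := by
  have hconj : y + lmap y (y⁻¹ * x * y) + -y ∈ I := by
    refine hI.add_conj_mem y (hI.lmap_mem y ?_)
    simpa only [inv_inv] using hI.mul_conj_mem y⁻¹ hx
  have hxy : x * y = y + lmap y (y⁻¹ * x * y) := by
    rw [← mul_eq_add_lmap]
    group
  rw [bstar, hxy, sub_eq_add_neg, add_assoc]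
  exact hI.add_mem (hI.neg_mem hx) hconj

theorem IsIdeal.bstar_mem_right {J : Set B} (hJ : IsIdeal J) (x : B) {y : B} (hy : y ∈ J) :
    bstar x y ∈ J := by
  rw [bstar, ← lmap, sub_eq_add_neg]
  exact hJ.add_mem (hJ.lmap_mem x hy) (hJ.neg_mem hy)

theorem IsMinimalIdeal.inter_eq_zero_of_ne {I J : Set B} (hI : IsMinimalIdeal I)
    (hJ : IsMinimalIdeal J) (hne : I ≠ J) : I ∩ J = {0} := by
  have hIJ := hI.1.inter hJ.1
  rcases hI.2.2 _ hIJ Set.inter_subset_left with h | hI_eq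
  · exact h
  rcases hJ.2.2 _ hIJ Set.inter_subset_right with h | hJ_eq
  · exact h
  exact absurd (hI_eq.symm.trans hJ_eq) hne

theorem IsMinimalIdeal.bstar_eq_zero_of_ne {I J : Set B} (hI : IsMinimalIdeal I)
    (hJ : IsMinimalIdeal J) (hne : I ≠ J) {x y : B} (hx : x ∈ I) (hy : y ∈ J) :
    bstar x y = 0 := by
  have hmem : bstar x y ∈ I ∩ J := ⟨hI.1.bstar_mem_left hx y, hJ.1.bstar_mem_right x hy⟩
  rwa [hI.inter_eq_zero_of_ne hJ hne] at hmem

theorem lmap_eq_self_of_mem_closure {S : Set B}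
    (hS : ∀ x ∈ S, ∀ y ∈ S, lmap x y = y) :
    ∀ x ∈ AddSubgroup.closure S, ∀ y ∈ AddSubgroup.closure S, lmap x y = y := by
  set C := AddSubgroup.closure S
  have hgen : ∀ x ∈ S, ∀ y ∈ C, lmap x y = y := fun x hx =>
    AddMonoidHom.eqOn_closure (f := lmapHom x) (g := AddMonoidHom.id B) (hS x hx)
  intro x hx
  induction hx using AddSubgroup.closure_induction with
  | mem x hxS => exact hgen x hxS
  | zero => exact fun y _ => by rw [zero_eq_one, lmap_one]
  | add x z _ hzC hx hz =>
    have hxz : x + z = x * z := by rw [mul_eq_add_lmap, hx z hzC]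
    exact fun y hy => by rw [hxz, lmap_mul, hz y hy, hx y hy]
  | neg x hxC hx =>
    have hneg : -x = x⁻¹ := by
      refine neg_eq_of_add_eq_zero_left ?_
      calc x⁻¹ + x = x⁻¹ + lmap x⁻¹ x := by rw [lmap_inv_eq_self (hx x hxC)]
        _ = 0 := by rw [← mul_eq_add_lmap, inv_mul_cancel, zero_eq_one]
    exact fun y hy => by rw [hneg, lmap_inv_eq_self (hx y hy)]

end SkewLeftBrace

/-- For minimal ideals `I₁, …, Iₙ` with sum `I = I₁+⋯+Iₙ`, one has `I_i*I_i = {0}`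
for all `i` if and only if `I*I = {0}`. -/
theorem sum_star_trivial_iff {B : Type*} [SkewLeftBrace B]
    (n : ℕ) (I : Fin n → Set B) (hI : ∀ k, IsMinimalIdeal (I k)) :
    (∀ k, setStar (I k) (I k) = {0}) ↔
      setStar (↑(AddSubgroup.closure (⋃ k, I k)) : Set B)
        (↑(AddSubgroup.closure (⋃ k, I k)) : Set B) = {0} := by
  simp only [setStar_eq_zero_iff, bstar_eq_zero_iff, SetLike.mem_coe]
  constructor
  · intro h
    refine lmap_eq_self_of_mem_closure ?_
    simp only [Set.mem_iUnion]
    rintro x ⟨i, hx⟩ y ⟨j, hy⟩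
    by_cases hij : I i = I j
    · exact h j x (hij ▸ hx) y hy
    · exact bstar_eq_zero_iff.mp ((hI i).bstar_eq_zero_of_ne (hI j) hij hx hy)
  · intro h k x hx y hy
    exact h x (AddSubgroup.subset_closure (Set.mem_iUnion_of_mem k hx))
      y (AddSubgroup.subset_closure (Set.mem_iUnion_of_mem k hy))
end

section
/- Let B₁ and B₂ be simple skew left braces and α : (B₂,∘) → Aut(B₁,+,∘) a non-trivial group homomorphism, and let B := B₁ ⋊_α B₂. If J̄ is an ideal of B, then either J̄ = {(0,0)}, or J̄ = B, or J̄ = B₁ × {0}, or else J̄ is isomorphic as a skew left brace to B₂ and B is isomorphic as a skew left brace to the direct product of the skew left braces B₁ × {0} and J̄ (the product skew left brace with componentwise operations). -/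
/-!
The projection `snd : B₁ ⋊_α B₂ → B₂` and the inclusion `x ↦ (x, 0)` of `B₁` preserve both
operations, so `snd(J)` is an ideal of `B₂` and `J ∩ (B₁ × {0})` is the image of an ideal of
`B₁`. Simplicity of `B₁` and `B₂` leaves four cases, and only one is not immediate: `J` and
`K = B₁ × {0}` meet in `0` and `K + J` is everything. For two such ideals, elements of `K` and
`J` commute for both operations and `k ∘ j = k + j`, so `(k, j) ↦ k + j` is an isomorphism
`K × J ≅ B₁ ⋊_α B₂`, while `snd` restricts to an isomorphism `J ≅ B₂`.
-/

namespace SkewLeftBrace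

variable {B C : Type*} [SkewLeftBrace B] [SkewLeftBrace C]

structure IsBraceHom (f : B → C) : Prop where
  map_add : ∀ x y, f (x + y) = f x + f y
  map_mul : ∀ x y, f (x * y) = f x * f y

namespace IsBraceHom

variable {f : B → C}

theorem map_zero (hf : IsBraceHom f) : f 0 = 0 :=
  (AddMonoidHom.mk' f hf.map_add).map_zero

theorem map_neg (hf : IsBraceHom f) (x : B) : f (-x) = -f x :=
  (AddMonoidHom.mk' f hf.map_add).map_neg x

theorem map_inv (hf : IsBraceHom f) (x : B) : f x⁻¹ = (f x)⁻¹ :=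
  (MonoidHom.mk' f hf.map_mul).map_inv x

theorem map_lmap (hf : IsBraceHom f) (a x : B) : f (lmap a x) = lmap (f a) (f x) := by
  simp only [lmap, hf.map_add, hf.map_neg, hf.map_mul]

theorem injOn_of_inter_subset_zero (hf : IsBraceHom f) {I : Set B} (hI : IsIdeal I)
    (h : I ∩ f ⁻¹' {0} ⊆ {0}) : Set.InjOn f I := by
  intro x hx y hy hxy
  have hdiff : x + -y ∈ I ∩ f ⁻¹' {0} := by
    refine ⟨hI.add_mem hx (hI.neg_mem hy), ?_⟩
    simp only [Set.mem_preimage, Set.mem_singleton_iff, hf.map_add, hf.map_neg, hxy,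
      add_neg_cancel]
  exact add_neg_eq_zero.mp (h hdiff)

theorem isBraceIsomorphic_of_bijective (hf : IsBraceHom f) (hb : Function.Bijective f) :
    IsBraceIsomorphic B C :=
  ⟨Equiv.ofBijective f hb, hf.map_add, hf.map_mul⟩

theorem isBraceIsomorphic_of_bijOn (hf : IsBraceHom f) {I : Set B} (hI : IsIdeal I)
    (hinj : Set.InjOn f I) (hsurj : Set.SurjOn f I Set.univ) :
    @IsBraceIsomorphic I C hI.brace _ :=
  let _ := hI.brace
  isBraceIsomorphic_of_bijective (f := I.domRestrict f)
    ⟨fun x y => hf.map_add x y, fun x y => hf.map_mul x y⟩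
    ⟨Set.injOn_iff_injective.mp hinj, Set.surjOn_iff_surjective.mp hsurj⟩

end IsBraceHom

theorem IsBraceIsomorphic.symm : IsBraceIsomorphic B C → IsBraceIsomorphic C B := by
  rintro ⟨e, hadd, hmul⟩
  refine ⟨e.symm, fun x y => e.injective ?_, fun x y => e.injective ?_⟩
  · rw [hadd, e.apply_symm_apply, e.apply_symm_apply, e.apply_symm_apply]
  · rw [hmul, e.apply_symm_apply, e.apply_symm_apply, e.apply_symm_apply]

theorem isIdeal_singleton_zero : IsIdeal ({0} : Set B) where
  zero_mem := rfl
  add_mem := by rintro _ _ rfl rfl; exact add_zero 0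
  neg_mem := by rintro _ rfl; exact neg_zero
  add_conj_mem b := by rintro _ rfl; rw [Set.mem_singleton_iff, add_zero, add_neg_cancel]
  mul_mem := by rintro _ _ rfl rfl; exact mul_zero' 0
  inv_mem := by rintro _ rfl; rw [Set.mem_singleton_iff, zero_eq_one, inv_one]
  mul_conj_mem b := by
    rintro _ rfl; rw [Set.mem_singleton_iff, mul_zero', mul_inv_cancel, zero_eq_one]
  lmap_mem a := by rintro _ rfl; rw [Set.mem_singleton_iff, lmap, mul_zero', neg_add_cancel]

theorem IsIdeal.preimage {J : Set C} (hJ : IsIdeal J) {f : B → C} (hf : IsBraceHom f) :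
    IsIdeal (f ⁻¹' J) where
  zero_mem := by simp only [Set.mem_preimage, hf.map_zero, hJ.zero_mem]
  add_mem x y hx hy := by simpa only [Set.mem_preimage, hf.map_add] using hJ.add_mem hx hy
  neg_mem x hx := by simpa only [Set.mem_preimage, hf.map_neg] using hJ.neg_mem hx
  add_conj_mem b x hx := by
    simpa only [Set.mem_preimage, hf.map_add, hf.map_neg] using hJ.add_conj_mem (f b) hx
  mul_mem x y hx hy := by simpa only [Set.mem_preimage, hf.map_mul] using hJ.mul_mem hx hy
  inv_mem x hx := by simpa only [Set.mem_preimage, hf.map_inv] using hJ.inv_mem hx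
  mul_conj_mem b x hx := by
    simpa only [Set.mem_preimage, hf.map_mul, hf.map_inv] using hJ.mul_conj_mem (f b) hx
  lmap_mem a x hx := by simpa only [Set.mem_preimage, hf.map_lmap] using hJ.lmap_mem (f a) hx

theorem IsIdeal.image {I : Set B} (hI : IsIdeal I) {f : B → C} (hf : IsBraceHom f)
    (hsurj : Function.Surjective f) : IsIdeal (f '' I) where
  zero_mem := ⟨0, hI.zero_mem, hf.map_zero⟩
  add_mem := by
    rintro _ _ ⟨x, hx, rfl⟩ ⟨y, hy, rfl⟩
    exact ⟨x + y, hI.add_mem hx hy, hf.map_add x y⟩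
  neg_mem := by
    rintro _ ⟨x, hx, rfl⟩
    exact ⟨-x, hI.neg_mem hx, hf.map_neg x⟩
  add_conj_mem := by
    rintro b _ ⟨x, hx, rfl⟩
    obtain ⟨b, rfl⟩ := hsurj b
    exact ⟨b + x + -b, hI.add_conj_mem b hx, by simp only [hf.map_add, hf.map_neg]⟩
  mul_mem := by
    rintro _ _ ⟨x, hx, rfl⟩ ⟨y, hy, rfl⟩
    exact ⟨x * y, hI.mul_mem hx hy, hf.map_mul x y⟩
  inv_mem := by
    rintro _ ⟨x, hx, rfl⟩
    exact ⟨x⁻¹, hI.inv_mem hx, hf.map_inv x⟩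
  mul_conj_mem := by
    rintro b _ ⟨x, hx, rfl⟩
    obtain ⟨b, rfl⟩ := hsurj b
    exact ⟨b * x * b⁻¹, hI.mul_conj_mem b hx, by simp only [hf.map_mul, hf.map_inv]⟩
  lmap_mem := by
    rintro a _ ⟨x, hx, rfl⟩
    obtain ⟨a, rfl⟩ := hsurj a
    exact ⟨lmap a x, hI.lmap_mem a hx, hf.map_lmap a x⟩

section Complement

variable {I J : Set B}

theorem add_comm_of_inter_subset_zero (hI : IsIdeal I) (hJ : IsIdeal J) (h : I ∩ J ⊆ {0})
    {a b : B} (ha : a ∈ I) (hb : b ∈ J) :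
    a + b = b + a := by
  have memI : a + (b + -a + -b) ∈ I := hI.add_mem ha (hI.add_conj_mem b (hI.neg_mem ha))
  have memJ : a + b + -a + -b ∈ J := hJ.add_mem (hJ.add_conj_mem a hb) (hJ.neg_mem hb)
  simp only [← add_assoc] at memI
  have hcomm : a + b + -a + -b = 0 := h ⟨memI, memJ⟩
  rw [add_neg_eq_zero, add_neg_eq_iff_eq_add] at hcomm
  exact hcomm

theorem mul_eq_add_of_inter_subset_zero (hI : IsIdeal I) (hJ : IsIdeal J) (h : I ∩ J ⊆ {0})
    {a b : B} (ha : a ∈ I) (hb : b ∈ J) :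
    a * b = a + b := by
  -- `a ∘ b = b + λ_b(b⁻¹ ∘ a ∘ b)`, which puts the star product `-a + a ∘ b - b` in `I`.
  have hconj : a * b = b + lmap b (b⁻¹ * a * b) := by
    rw [lmap, add_neg_cancel_left, mul_assoc, mul_inv_cancel_left]
  have memI : -a + (b + lmap b (b⁻¹ * a * b) + -b) ∈ I := by
    refine hI.add_mem (hI.neg_mem ha) (hI.add_conj_mem b (hI.lmap_mem b ?_))
    simpa only [inv_inv] using hI.mul_conj_mem b⁻¹ ha
  have memJ : lmap a b + -b ∈ J := hJ.add_mem (hJ.lmap_mem a hb) (hJ.neg_mem hb)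
  rw [← add_assoc, ← hconj] at memI
  rw [lmap] at memJ
  have hstar : -a + a * b + -b = 0 := h ⟨memI, memJ⟩
  rw [add_neg_eq_zero, neg_add_eq_iff_eq_add] at hstar
  exact hstar

theorem mul_comm_of_inter_subset_zero (hI : IsIdeal I) (hJ : IsIdeal J) (h : I ∩ J ⊆ {0})
    {a b : B} (ha : a ∈ I) (hb : b ∈ J) :
    a * b = b * a := by
  rw [mul_eq_add_of_inter_subset_zero hI hJ h ha hb,
    mul_eq_add_of_inter_subset_zero hJ hI (Set.inter_comm I J ▸ h) hb ha,
    add_comm_of_inter_subset_zero hI hJ h ha hb]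

theorem isBraceIsomorphic_prod_of_inter_subset_zero (hI : IsIdeal I) (hJ : IsIdeal J)
    (h : I ∩ J ⊆ {0}) (hsum : setSum I J = Set.univ) :
    @IsBraceIsomorphic B (I × J) _ (@prodBrace I J hI.brace hJ.brace) := by
  let _ := hI.brace
  let _ := hJ.brace
  let _ := prodBrace I J
  refine IsBraceIsomorphic.symm (IsBraceHom.isBraceIsomorphic_of_bijective
    (f := fun p : I × J => p.1.1 + p.2.1) ⟨?_, ?_⟩ ⟨?_, ?_⟩)
  · rintro ⟨i, j⟩ ⟨i', j'⟩
    show i.1 + i'.1 + (j.1 + j'.1) = i.1 + j.1 + (i'.1 + j'.1)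
    rw [add_assoc, ← add_assoc i'.1, add_comm_of_inter_subset_zero hI hJ h i'.2 j.2]
    simp only [add_assoc]
  · rintro ⟨i, j⟩ ⟨i', j'⟩
    show i.1 * i'.1 + j.1 * j'.1 = (i.1 + j.1) * (i'.1 + j'.1)
    rw [← mul_eq_add_of_inter_subset_zero hI hJ h i.2 j.2,
      ← mul_eq_add_of_inter_subset_zero hI hJ h i'.2 j'.2,
      ← mul_eq_add_of_inter_subset_zero hI hJ h (hI.mul_mem i.2 i'.2) (hJ.mul_mem j.2 j'.2),
      mul_assoc, ← mul_assoc i'.1, mul_comm_of_inter_subset_zero hI hJ h i'.2 j.2]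
    simp only [mul_assoc]
  · rintro ⟨i, j⟩ ⟨i', j'⟩ hij
    have hdiff : -i'.1 + i.1 = j'.1 + -j.1 := by
      rw [neg_add_eq_iff_eq_add, ← add_assoc, eq_add_neg_iff_add_eq]
      exact hij
    have hzero : -i'.1 + i.1 = 0 :=
      h ⟨hI.add_mem (hI.neg_mem i'.2) i.2, hdiff ▸ hJ.add_mem j'.2 (hJ.neg_mem j.2)⟩
    rw [hzero, eq_comm, add_neg_eq_zero] at hdiff
    rw [neg_add_eq_zero] at hzero
    exact Prod.ext (Subtype.ext hzero.symm) (Subtype.ext hdiff.symm)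
  · intro b
    obtain ⟨i, hi, j, hj, rfl⟩ := hsum.symm ▸ Set.mem_univ b
    exact ⟨(⟨i, hi⟩, ⟨j, hj⟩), rfl⟩

end Complement

variable {B₁ B₂ : Type*}

namespace SDP

theorem snd_surjective [Zero B₁] : Function.Surjective (SDP.snd : SDP B₁ B₂ → B₂) :=
  fun y => ⟨⟨0, y⟩, rfl⟩

theorem range_mk_zero [Zero B₂] :
    Set.range (fun x : B₁ => SDP.mk x (0 : B₂)) = {p : SDP B₁ B₂ | p.snd = 0} :=
  Set.Subset.antisymm (Set.range_subset_iff.mpr fun _ => rfl)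
    fun p hp => ⟨p.fst, SDP.ext rfl hp.symm⟩

end SDP

variable [SkewLeftBrace B₁] [SkewLeftBrace B₂] (α : BraceActionHom B₂ B₁)

theorem BraceActionHom.act_zero (x : B₁) : α.act 0 x = x := by
  rw [zero_eq_one, α.act_one]

namespace SDP

theorem isBraceHom_snd : @IsBraceHom _ _ α.sdp _ (SDP.snd : SDP B₁ B₂ → B₂) :=
  let _ := α.sdp
  ⟨fun _ _ => rfl, fun _ _ => rfl⟩

theorem isBraceHom_mk_zero : @IsBraceHom _ _ _ α.sdp (fun x : B₁ => SDP.mk x (0 : B₂)) := by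
  let _ := α.sdp
  refine ⟨fun x y => SDP.ext rfl (add_zero 0).symm, fun x y => SDP.ext ?_ ?_⟩
  · show x * y = x * α.act 0 y
    rw [α.act_zero]
  · show (0 : B₂) = 0 * 0
    rw [mul_zero']

theorem isIdeal_snd_eq_zero : @IsIdeal _ α.sdp {p : SDP B₁ B₂ | p.snd = 0} :=
  let _ := α.sdp
  isIdeal_singleton_zero.preimage (isBraceHom_snd α)

theorem setSum_snd_eq_zero_eq_univ {J : Set (SDP B₁ B₂)} (hJ : SDP.snd '' J = Set.univ) :
    @setSum _ α.sdp {p : SDP B₁ B₂ | p.snd = 0} J = Set.univ := by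
  let _ := α.sdp
  refine Set.eq_univ_of_forall fun p => ?_
  obtain ⟨q, hq, hqp⟩ := hJ.symm ▸ Set.mem_univ p.snd
  refine ⟨p + -q, ?_, q, hq, (neg_add_cancel_right p q).symm⟩
  show p.snd + -q.snd = 0
  rw [hqp, add_neg_cancel]

end SDP

end SkewLeftBrace

open SkewLeftBrace

theorem ideal_of_sdp_of_simple_general {B₁ B₂ : Type*} [SkewLeftBrace B₁] [SkewLeftBrace B₂]
    (h₁ : SkewLeftBrace.Simple B₁) (h₂ : SkewLeftBrace.Simple B₂)
    (α : BraceActionHom B₂ B₁)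
    (J : Set (SDP B₁ B₂)) (hJ : @IsIdeal _ α.sdp J) :
    J = {SDP.mk 0 0} ∨ J = Set.univ ∨ J = {p : SDP B₁ B₂ | p.snd = 0} ∨
      (@IsBraceIsomorphic _ B₂ (@IsIdeal.brace _ α.sdp _ hJ) _ ∧
        ∃ hK : @IsIdeal _ α.sdp {p : SDP B₁ B₂ | p.snd = 0},
          @IsBraceIsomorphic (SDP B₁ B₂) _ α.sdp
            (@prodBrace _ _ (@IsIdeal.brace _ α.sdp _ hK) (@IsIdeal.brace _ α.sdp _ hJ))) := by
  let _ := α.sdp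
  set K : Set (SDP B₁ B₂) := {p | p.snd = 0}
  set ι : B₁ → SDP B₁ B₂ := fun x => SDP.mk x 0
  have hK : IsIdeal K := SDP.isIdeal_snd_eq_zero α
  have hJK : J ∩ K = ι '' (ι ⁻¹' J) := by
    rw [Set.image_preimage_eq_inter_range, SDP.range_mk_zero]
  rcases h₂.2 _ (hJ.image (SDP.isBraceHom_snd α) SDP.snd_surjective) with hs | hs <;>
    rcases h₁.2 _ (hJ.preimage (SDP.isBraceHom_mk_zero α)) with hk | hk <;>
    rw [hk] at hJK
  · have hJsub : J ⊆ K := Set.image_subset_iff.mp hs.subset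
    left
    rw [← Set.inter_eq_left.mpr hJsub, hJK, Set.image_singleton]
  · have hJsub : J ⊆ K := Set.image_subset_iff.mp hs.subset
    rw [Set.image_univ, SDP.range_mk_zero] at hJK
    right; right; left
    exact Set.Subset.antisymm hJsub (Set.inter_eq_right.mp hJK)
  · rw [Set.image_singleton] at hJK
    have hsnd := SDP.isBraceHom_snd α
    right; right; right
    exact ⟨hsnd.isBraceIsomorphic_of_bijOn hJ (hsnd.injOn_of_inter_subset_zero hJ hJK.subset)
        hs.symm.subset,
      hK, isBraceIsomorphic_prod_of_inter_subset_zero hK hJ (Set.inter_comm J K ▸ hJK.subset)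
        (SDP.setSum_snd_eq_zero_eq_univ α hs)⟩
  · rw [Set.image_univ, SDP.range_mk_zero] at hJK
    right; left
    refine Set.eq_univ_of_forall fun p => ?_
    obtain ⟨k, hk, j, hj, rfl⟩ := (SDP.setSum_snd_eq_zero_eq_univ α hs).symm ▸ Set.mem_univ p
    exact hJ.add_mem (Set.inter_eq_right.mp hJK hk) hj

/-- Ideals of a semidirect product of simple skew left braces via a non-trivial
action: any ideal is `{0}`, everything, `B₁ × {0}`, or a copy of `B₂` splitting the
product as a direct product. -/
theorem ideal_of_sdp_of_simple {B₁ B₂ : Type*} [SkewLeftBrace B₁] [SkewLeftBrace B₂]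
    (h₁ : SkewLeftBrace.Simple B₁) (h₂ : SkewLeftBrace.Simple B₂)
    (α : BraceActionHom B₂ B₁)
    (hα : ∃ (a : B₂) (x : B₁), α.act a x ≠ x)
    (J : Set (SDP B₁ B₂)) (hJ : @IsIdeal _ α.sdp J) :
    J = {SDP.mk 0 0} ∨ J = Set.univ ∨ J = {p : SDP B₁ B₂ | p.snd = 0} ∨
      (@IsBraceIsomorphic _ B₂ (@IsIdeal.brace _ α.sdp _ hJ) _ ∧
        ∃ hK : @IsIdeal _ α.sdp {p : SDP B₁ B₂ | p.snd = 0},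
          @IsBraceIsomorphic (SDP B₁ B₂) _ α.sdp
            (@prodBrace _ _ (@IsIdeal.brace _ α.sdp _ hK) (@IsIdeal.brace _ α.sdp _ hJ))) :=
  ideal_of_sdp_of_simple_general h₁ h₂ α J hJ
end
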